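/- arXiv:2109.11528 — 3 statements merged into one kernel-verified Lean document; each statement's English description precedes it below -/
import Mathlib

section
/- For every real r with 0 < r < 1, we have r + 2^{1-r} - 2 < 0, and for every real r with r < 0 or r > 1, we have r + 2^{1-r} - 2 > 0. -/
/-!
The function `f r = r + 2^(1-r) - 2` is strictly convex, being a linear function plus the strictly
convex `r ↦ exp ((1 - r) log 2)`, and it vanishes at `0` and `1`. A strictly convex function lies
strictly below its chord between two points where it takes equal values, and strictly above the
line through them outside that interval, by monotonicity of slopes.
-/

open Set Real

section

variable {𝕜 : Type*} [Field 𝕜] [LinearOrder 𝕜] [IsStrictOrderedRing 𝕜] {s : Set 𝕜} {f : 𝕜 → 𝕜}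
  {a b x : 𝕜}

theorem StrictConvexOn.lt_of_mem_Ioo (hf : StrictConvexOn 𝕜 s f) (ha : a ∈ s) (hb : b ∈ s)
    (hfab : f a = f b) (hx : x ∈ Ioo a b) : f x < f a := by
  have hab : a < b := hx.1.trans hx.2
  simpa [hfab] using hf.lt_on_openSegment ha hb hab.ne (openSegment_eq_Ioo hab ▸ hx)

theorem StrictConvexOn.lt_of_lt_left (hf : StrictConvexOn 𝕜 s f) (hx : x ∈ s) (hb : b ∈ s)
    (hfab : f a = f b) (hxa : x < a) (hab : a < b) : f a < f x := by
  have hslope := hf.slope_strict_mono_adjacent hx hb hxa hab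
  rw [hfab, sub_self, zero_div, div_lt_iff₀ (sub_pos.2 hxa), zero_mul] at hslope
  linarith

theorem StrictConvexOn.lt_of_right_lt (hf : StrictConvexOn 𝕜 s f) (ha : a ∈ s) (hx : x ∈ s)
    (hfab : f a = f b) (hab : a < b) (hbx : b < x) : f b < f x := by
  have hslope := hf.slope_strict_mono_adjacent ha hx hab hbx
  rw [hfab, sub_self, zero_div, div_pos_iff_of_pos_right (sub_pos.2 hbx)] at hslope
  linarith

end

theorem strictConvexOn_rpow_sub {b : ℝ} (hb₀ : 0 < b) (hb₁ : b ≠ 1) (c : ℝ) :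
    StrictConvexOn ℝ univ fun x : ℝ ↦ b ^ (c - x) := by
  refine ⟨convex_univ, fun x _ y _ hxy u v hu hv huv ↦ ?_⟩
  have hne : log b * (c - x) ≠ log b * (c - y) := by
    simpa [log_ne_zero_of_pos_of_ne_one hb₀ hb₁, sub_right_inj] using hxy
  have hexp := strictConvexOn_exp.2 (mem_univ _) (mem_univ _) hne hu hv huv
  simp only [rpow_def_of_pos hb₀, smul_eq_mul] at hexp ⊢
  convert hexp using 2
  linear_combination (-c * log b) * huv

/-- Sign of `f(r) = r + 2^(1-r) - 2` away from its zeros at `0` and `1`. -/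
theorem sign_of_r_add_two_rpow :
    (∀ r : ℝ, 0 < r → r < 1 → r + (2 : ℝ) ^ (1 - r) - 2 < 0) ∧
    (∀ r : ℝ, (r < 0 ∨ 1 < r) → 0 < r + (2 : ℝ) ^ (1 - r) - 2) := by
  set f : ℝ → ℝ := fun r ↦ r + (2 : ℝ) ^ (1 - r) - 2
  have hf : StrictConvexOn ℝ univ f :=
    ((convexOn_id convex_univ).add_strictConvexOn
      (strictConvexOn_rpow_sub two_pos (by norm_num) 1)).add_const (-2)
  have hf0 : f 0 = 0 := by norm_num [f]
  have hf1 : f 1 = 0 := by norm_num [f]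
  have hf01 : f 0 = f 1 := hf0.trans hf1.symm
  refine ⟨fun r hr₀ hr₁ ↦ hf0 ▸ hf.lt_of_mem_Ioo (mem_univ 0) (mem_univ 1) hf01 ⟨hr₀, hr₁⟩, ?_⟩
  rintro r (hr | hr)
  · exact hf0 ▸ hf.lt_of_lt_left (mem_univ r) (mem_univ 1) hf01 hr one_pos
  · exact hf1 ▸ hf.lt_of_right_lt (mem_univ 0) (mem_univ r) hf01 one_pos hr
end

section
/- For any r ∈ ℝ with r ≠ 0 and r ≠ 1, there exists b with 0 < b < 1/2 such that g_r(b) ≠ 0, where g_r(b) := r - (2/(b-1)) · ((1 + (b-1)/2)^r - 1). -/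
open Real

lemma key_rpow_ne (r : ℝ) (hr0 : r ≠ 0) (hr1 : r ≠ 1) :
    ((5 : ℝ)/8) ^ r ≠ 1 - 3 * r / 8 := by
  have hs : (-1 : ℝ) ≤ -(3/8) := by norm_num
  have hs' : (-(3/8) : ℝ) ≠ 0 := by norm_num
  rcases lt_trichotomy r 0 with hr | hr | hr
  · -- r < 0
    rcases lt_trichotomy r (-1) with h1 | h1 | h1
    · -- r < -1 : use Bernoulli at 8/5 with exponent -r > 1
      have hp : 1 < -r := by linarith
      have hB := one_add_mul_self_lt_rpow_one_add (s := 3/5) (by norm_num) (by norm_num) hp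
      have hrw : ((1 : ℝ) + 3/5) ^ (-r) = ((5:ℝ)/8) ^ r := by
        rw [Real.rpow_neg (by norm_num)]
        rw [show ((1:ℝ) + 3/5) = ((5:ℝ)/8)⁻¹ by norm_num,
          Real.inv_rpow (by norm_num), inv_inv]
      rw [hrw] at hB
      have : 1 - 3 * r / 8 < ((5:ℝ)/8) ^ r := by nlinarith
      exact this.ne'
    · -- r = -1
      subst_vars
      rw [show (-1 : ℝ) = ((-1 : ℤ) : ℝ) by norm_num, Real.rpow_intCast]
      norm_num
    · -- -1 < r < 0 : let q = -r ∈ (0,1)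
      have hq0 : (0:ℝ) < -r := by linarith
      have hq1 : -r < 1 := by linarith
      have hB := rpow_one_add_lt_one_add_mul_self hs hs' hq0 hq1
      have h58 : ((1:ℝ) + -(3/8)) = 5/8 := by norm_num
      rw [h58] at hB
      have hpos : (0:ℝ) < ((5:ℝ)/8) ^ (-r) := Real.rpow_pos_of_pos (by norm_num) _
      have hrec : ((5:ℝ)/8) ^ r = (((5:ℝ)/8) ^ (-r))⁻¹ := by
        rw [← Real.rpow_neg (by norm_num), neg_neg]
      have hub : (0:ℝ) < 1 + (-r) * -(3/8) := by nlinarith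
      have hgt : (1 + (-r) * -(3/8))⁻¹ < ((5:ℝ)/8) ^ r := by
        rw [hrec]
        exact inv_strictAnti₀ hpos hB
      have h2 : 1 - 3 * r / 8 < (1 + (-r) * -(3/8))⁻¹ := by
        rw [inv_eq_one_div, lt_div_iff₀ hub]
        nlinarith
      exact (h2.trans hgt).ne'
  · exact absurd hr hr0
  · rcases lt_trichotomy r 1 with h1 | h1 | h1
    · -- 0 < r < 1
      have hB := rpow_one_add_lt_one_add_mul_self hs hs' hr h1
      have h58 : ((1:ℝ) + -(3/8)) = 5/8 := by norm_num
      rw [h58] at hB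
      have : ((5:ℝ)/8) ^ r < 1 - 3 * r / 8 := by nlinarith
      exact this.ne
    · exact absurd h1 hr1
    · -- 1 < r
      have hB := one_add_mul_self_lt_rpow_one_add hs hs' h1
      have h58 : ((1:ℝ) + -(3/8)) = 5/8 := by norm_num
      rw [h58] at hB
      have : 1 - 3 * r / 8 < ((5:ℝ)/8) ^ r := by nlinarith
      exact this.ne'

/-- For `r ∉ {0,1}` there exists `b ∈ (0, 1/2)` with `g_r(b) ≠ 0`, where
`g_r(b) = r - (2/(b-1)) * ((1 + (b-1)/2)^r - 1)`. -/
theorem exists_b_g_ne_zero (r : ℝ) (hr0 : r ≠ 0) (hr1 : r ≠ 1) :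
    ∃ b : ℝ, 0 < b ∧ b < 1 / 2 ∧
      r - (2 / (b - 1)) * ((1 + (b - 1) / 2) ^ r - 1) ≠ 0 := by
  refine ⟨1/4, by norm_num, by norm_num, ?_⟩
  have hkey := key_rpow_ne r hr0 hr1
  have h1 : ((1 : ℝ) + ((1:ℝ)/4 - 1) / 2) = 5/8 := by norm_num
  rw [h1]
  intro hzero
  apply hkey
  have h2 : ((2:ℝ) / ((1:ℝ)/4 - 1)) = -8/3 := by norm_num
  rw [h2] at hzero
  nlinarith [hzero]
end

section
/- Let A₁ = diag(1/2, 1), A₂ = diag(1, 1/2), M₁ = diag(4, 1), M₂ = diag(1, 4) be 2×2 real diagonal matrices. Then for every s > 0: (1/2)·tr((A₁ M₁ A₁)^s) + (1/2)·tr((A₂ M₂ A₂)^s) − tr((((A₁+A₂)/2)((M₁+M₂)/2)((A₁+A₂)/2))^s) = 2 − 2·(45/32)^s, which is strictly negative. -/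
open Matrix

/-- Real power of a real symmetric matrix via the spectral functional calculus
(junk value `0` for non-symmetric matrices). -/
noncomputable def matRpow {n : Type*} [Fintype n] [DecidableEq n]
    (r : ℝ) (A : Matrix n n ℝ) : Matrix n n ℝ :=
  if hA : A.IsHermitian then
    (hA.eigenvectorUnitary : Matrix n n ℝ) *
      Matrix.diagonal (fun i => (hA.eigenvalues i ^ r : ℝ)) *
      (hA.eigenvectorUnitary : Matrix n n ℝ)ᴴ
  else 0

section

variable {n : Type*} [Fintype n] [DecidableEq n]

theorem trace_matRpow (r : ℝ) {A : Matrix n n ℝ} (hA : A.IsHermitian) :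
    (matRpow r A).trace = ∑ i, hA.eigenvalues i ^ r := by
  have hU : (hA.eigenvectorUnitary : Matrix n n ℝ)ᴴ * hA.eigenvectorUnitary = 1 :=
    mem_unitaryGroup_iff'.mp hA.eigenvectorUnitary.2
  rw [matRpow, dif_pos hA, trace_mul_cycle, hU, one_mul, trace_diagonal]

theorem Matrix.IsHermitian.map_eigenvalues_diagonal {d : n → ℝ} (hd : (diagonal d).IsHermitian) :
    Finset.univ.val.map hd.eigenvalues = Finset.univ.val.map d := by
  have hroots := hd.roots_charpoly_eq_eigenvalues
  rw [charpoly_diagonal, Polynomial.roots_prod _ _ (Finset.prod_ne_zero_iff.mpr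
    fun i _ => Polynomial.X_sub_C_ne_zero (d i))] at hroots
  simpa using hroots.symm

theorem trace_matRpow_diagonal (r : ℝ) (d : n → ℝ) :
    (matRpow r (diagonal d)).trace = ∑ i, d i ^ r := by
  have hd : (diagonal d).IsHermitian := isHermitian_diagonal d
  rw [trace_matRpow r hd]
  simpa using congrArg (fun m => (m.map (· ^ r)).sum) hd.map_eigenvalues_diagonal

end

/-- Midpoint joint-convexity defect for `A₁ = diag(1/2,1)`, `A₂ = diag(1,1/2)`,
`M₁ = diag(4,1)`, `M₂ = diag(1,4)`: it equals `2 - 2 (45/32)^s < 0` for `s > 0`. -/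
theorem midpoint_defect (s : ℝ) (hs : 0 < s) :
    (1/2) * (matRpow s (Matrix.diagonal ![(1:ℝ)/2, 1] * Matrix.diagonal ![(4:ℝ), 1] *
        Matrix.diagonal ![(1:ℝ)/2, 1])).trace +
      (1/2) * (matRpow s (Matrix.diagonal ![(1:ℝ), 1/2] * Matrix.diagonal ![(1:ℝ), 4] *
        Matrix.diagonal ![(1:ℝ), 1/2])).trace -
      (matRpow s (((1/2 : ℝ) • (Matrix.diagonal ![(1:ℝ)/2, 1] + Matrix.diagonal ![(1:ℝ), 1/2])) *
        ((1/2 : ℝ) • (Matrix.diagonal ![(4:ℝ), 1] + Matrix.diagonal ![(1:ℝ), 4])) *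
        ((1/2 : ℝ) • (Matrix.diagonal ![(1:ℝ)/2, 1] + Matrix.diagonal ![(1:ℝ), 1/2])))).trace =
      2 - 2 * (45/32 : ℝ) ^ s ∧
    2 - 2 * (45/32 : ℝ) ^ s < 0 := by
  simp only [diagonal_add, ← diagonal_smul, diagonal_mul_diagonal, trace_matRpow_diagonal,
    Fin.sum_univ_two]
  have hgt : 1 < (45/32 : ℝ) ^ s := Real.one_lt_rpow (by norm_num) hs
  exact ⟨by norm_num [two_mul], by linarith⟩
end
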